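/- Let μ be a finite positive Borel measure on 𝕋, x ∈ 𝕋, and suppose limsup_{n→∞} n^{-β} G_n(x) < ∞ for some β ∈ [-1,1], where G_n(x) = ∫ K_{n-1}(x - y) dμ(y). Then for every α < 1 - β, limsup_{r→0} μ([x-r, x+r]) r^{-α} < ∞; i.e., the critical Hölder exponent α_μ(x) satisfies α_μ(x) ≥ 1 - β. -/

import Mathlib

/-!
On `|t| ≤ 1/(2n)` Jordan's inequality gives `K_{n-1}(t) ≥ 4n/π²`, so
`μ([x-r, x+r]) ≤ (π²/(4n)) G_n(x)` whenever `2nr ≤ 1`. Taking `n = ⌊1/(2r)⌋`, which lies between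
`1/(4r)` and `1/(2r)`, the bound `G_n(x) ≤ C n^β` turns into `μ([x-r, x+r]) ≤ C' r^{1-β}`, and
`r^{1-β-α} ≤ 1` for `r ≤ 1`.
-/

open MeasureTheory Filter
open scoped Real

open Classical in
/-- The Fejér kernel `K_{n-1}(y) = (1/n) (sin(nπy)/sin(πy))²` on the circle,
with value `n` at integer points (the continuous extension). -/
noncomputable def fejer (n : ℕ) (y : ℝ) : ℝ :=
  if ∃ m : ℤ, y = (m : ℝ) then (n : ℝ)
  else (1 / (n : ℝ)) * (Real.sin (n * π * y) / Real.sin (π * y)) ^ 2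

open Topology

lemma Real.abs_sin_nat_mul_le (n : ℕ) (x : ℝ) : |Real.sin (n * x)| ≤ n * |Real.sin x| := by
  induction n with
  | zero => simp
  | succ k ih =>
    rw [Nat.cast_succ, add_mul, one_mul, Real.sin_add]
    calc |Real.sin (k * x) * Real.cos x + Real.cos (k * x) * Real.sin x|
        ≤ |Real.sin (k * x)| * |Real.cos x| + |Real.cos (k * x)| * |Real.sin x| := by
          rw [← abs_mul, ← abs_mul]
          exact abs_add_le _ _
      _ ≤ k * |Real.sin x| * 1 + 1 * |Real.sin x| := by
          gcongr
          exacts [Real.abs_cos_le_one _, Real.abs_cos_le_one _]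
      _ = (k + 1) * |Real.sin x| := by ring

lemma fejer_nonneg (n : ℕ) (y : ℝ) : 0 ≤ fejer n y := by
  unfold fejer; split_ifs <;> positivity

lemma fejer_le (n : ℕ) (y : ℝ) : fejer n y ≤ n := by
  unfold fejer
  split_ifs with hy
  · rfl
  rcases n.eq_zero_or_pos with rfl | hn
  · simp
  have hsin : Real.sin (π * y) ≠ 0 := by
    rw [Ne, Real.sin_eq_zero_iff]
    rintro ⟨m, hm⟩
    exact hy ⟨m, (mul_left_cancel₀ Real.pi_ne_zero (by linarith)).symm⟩
  have hratio : (Real.sin (n * π * y) / Real.sin (π * y)) ^ 2 ≤ (n : ℝ) ^ 2 := by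
    rw [div_pow, div_le_iff₀ (by positivity), ← mul_pow, ← sq_abs, ← sq_abs (_ * _), abs_mul,
      Nat.abs_cast, mul_assoc]
    gcongr
    exact Real.abs_sin_nat_mul_le n (π * y)
  calc 1 / (n : ℝ) * (Real.sin (n * π * y) / Real.sin (π * y)) ^ 2 ≤ 1 / n * n ^ 2 := by gcongr
    _ = (n : ℝ) := by field_simp

lemma measurable_fejer (n : ℕ) : Measurable (fejer n) := by
  refine Measurable.ite ?_ measurable_const (by fun_prop)
  simpa only [Set.range, eq_comm] using (Set.countable_range ((↑) : ℤ → ℝ)).measurableSet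

lemma fejer_neg (n : ℕ) (y : ℝ) : fejer n (-y) = fejer n y := by
  have hZ : (∃ m : ℤ, -y = m) ↔ ∃ m : ℤ, y = m :=
    ⟨fun ⟨m, hm⟩ => ⟨-m, by push_cast; linarith⟩, fun ⟨m, hm⟩ => ⟨-m, by push_cast; linarith⟩⟩
  simp only [fejer, mul_neg, Real.sin_neg, neg_div_neg_eq]
  classical
  exact if_congr hZ rfl rfl

lemma fejer_abs (n : ℕ) (y : ℝ) : fejer n |y| = fejer n y := by
  rcases abs_choice y with h | h <;> rw [h]
  exact fejer_neg n y

-- Jordan's inequality `2x/π ≤ sin x` on `[0, π/2]` above, `sin x ≤ x` below.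
lemma two_mul_div_pi_le_sin_div_sin {n : ℕ} (hn : 0 < n) {s : ℝ} (hs : 0 < s)
    (hns : 2 * n * s ≤ 1) :
    2 * n / π ≤ Real.sin (n * π * s) / Real.sin (π * s) := by
  have hn1 : (1 : ℝ) ≤ n := by exact_mod_cast hn
  have hsin_pos : 0 < Real.sin (π * s) :=
    Real.sin_pos_of_pos_of_lt_pi (by positivity) (by nlinarith [Real.pi_pos])
  rw [le_div_iff₀ hsin_pos]
  calc 2 * n / π * Real.sin (π * s) ≤ 2 * n / π * (π * s) := by
        gcongr; exact Real.sin_le (by positivity)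
    _ = 2 / π * (n * π * s) := by field_simp
    _ ≤ Real.sin (n * π * s) :=
        Real.mul_le_sin (by positivity) (by nlinarith [Real.pi_pos])

lemma four_mul_div_pi_sq_le_fejer {n : ℕ} (hn : 0 < n) {t : ℝ} (ht : 2 * n * |t| ≤ 1) :
    4 * n / π ^ 2 ≤ fejer n t := by
  rw [← fejer_abs]
  unfold fejer
  split_ifs with hZ
  · rw [div_le_iff₀ (by positivity)]
    have : (4 : ℝ) ≤ π ^ 2 := by nlinarith [Real.pi_gt_three]
    nlinarith [(Nat.cast_pos.mpr hn : (0 : ℝ) < n)]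
  have hs : 0 < |t| := (abs_nonneg t).lt_of_ne fun h => hZ ⟨0, by simp [← h]⟩
  calc 4 * n / π ^ 2 = 1 / n * (2 * n / π) ^ 2 := by field_simp; ring
    _ ≤ _ := by
        gcongr 1 / _ * ?_
        exact pow_le_pow_left₀ (by positivity) (two_mul_div_pi_le_sin_div_sin hn hs ht) 2

lemma rpow_le_four_rpow_abs {t : ℝ} (ht : 1 / 4 ≤ t) (ht' : t ≤ 1) (γ : ℝ) : t ^ γ ≤ 4 ^ |γ| := by
  rcases le_total 0 γ with hγ | hγ
  · exact (Real.rpow_le_one (by linarith) ht' hγ).trans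
      (Real.one_le_rpow (by norm_num) (abs_nonneg γ))
  · calc t ^ γ ≤ (1 / 4) ^ γ := Real.rpow_le_rpow_of_nonpos (by norm_num) ht hγ
      _ = 4 ^ |γ| := by
        rw [abs_of_nonpos hγ, one_div, Real.inv_rpow (by norm_num), Real.rpow_neg (by norm_num)]

lemma natFloor_one_div_two_mul_pos {r : ℝ} (hr₀ : 0 < r) (hr : r ≤ 1 / 2) :
    0 < ⌊1 / (2 * r)⌋₊ := by
  rw [Nat.floor_pos, le_div_iff₀ (by positivity)]
  linarith

lemma two_mul_natFloor_one_div_two_mul_mul_le {r : ℝ} (hr₀ : 0 < r) :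
    2 * (⌊1 / (2 * r)⌋₊ : ℝ) * r ≤ 1 := by
  have := Nat.floor_le (a := 1 / (2 * r)) (by positivity)
  rw [le_div_iff₀ (by positivity)] at this
  linarith

lemma one_div_four_le_natFloor_one_div_two_mul_mul {r : ℝ} (hr₀ : 0 < r) (hr : r ≤ 1 / 4) :
    1 / 4 ≤ (⌊1 / (2 * r)⌋₊ : ℝ) * r := by
  have := Nat.lt_floor_add_one (1 / (2 * r))
  rw [div_lt_iff₀ (by positivity)] at this
  nlinarith

lemma natFloor_one_div_two_mul_rpow_le {r : ℝ} (hr₀ : 0 < r) (hr : r ≤ 1 / 4) (γ : ℝ) :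
    (⌊1 / (2 * r)⌋₊ : ℝ) ^ γ ≤ 4 ^ |γ| * r ^ (-γ) := by
  have hsplit : (⌊1 / (2 * r)⌋₊ : ℝ) ^ γ = (⌊1 / (2 * r)⌋₊ * r) ^ γ * r ^ (-γ) := by
    rw [Real.mul_rpow (Nat.cast_nonneg _) hr₀.le, mul_assoc, ← Real.rpow_add hr₀, add_neg_cancel,
      Real.rpow_zero, mul_one]
  rw [hsplit]
  gcongr
  refine rpow_le_four_rpow_abs (one_div_four_le_natFloor_one_div_two_mul_mul hr₀ hr) ?_ γ
  linarith [two_mul_natFloor_one_div_two_mul_mul_le hr₀]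

lemma tendsto_natFloor_one_div_two_mul :
    Tendsto (fun r : ℝ => ⌊1 / (2 * r)⌋₊) (𝓝[>] 0) atTop := by
  refine tendsto_nat_floor_atTop.comp ?_
  simpa only [one_div, mul_inv] using tendsto_inv_nhdsGT_zero.const_mul_atTop (inv_pos.2 two_pos)

lemma eventually_mul_rpow_neg_le_of_le_rpow {f : ℝ → ℝ} {K s α : ℝ} (hK : 0 ≤ K) (hα : α < s)
    (hf : ∀ᶠ r in 𝓝[>] 0, f r ≤ K * r ^ s) : ∀ᶠ r in 𝓝[>] 0, f r * r ^ (-α) ≤ K := by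
  filter_upwards [hf, Ioo_mem_nhdsGT one_pos] with r hfr hr
  calc f r * r ^ (-α) ≤ K * r ^ s * r ^ (-α) :=
        mul_le_mul_of_nonneg_right hfr (Real.rpow_nonneg hr.1.le _)
    _ = K * r ^ (s - α) := by rw [mul_assoc, ← Real.rpow_add hr.1, sub_eq_add_neg]
    _ ≤ K * 1 := by gcongr; exact Real.rpow_le_one hr.1.le hr.2.le (by linarith)
    _ = K := mul_one K

section

variable (μ : Measure ℝ) [IsFiniteMeasure μ] (x : ℝ) {β C : ℝ}

lemma integrable_fejer_sub (n : ℕ) : Integrable (fun y => fejer n (x - y)) μ :=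
  (integrable_const (n : ℝ)).mono' ((measurable_fejer n).comp (by fun_prop)).aestronglyMeasurable
    (ae_of_all _ fun y => by
      rw [Real.norm_eq_abs, abs_of_nonneg (fejer_nonneg _ _)]
      exact fejer_le _ _)

lemma measure_Icc_mul_le_integral_fejer {n : ℕ} (hn : 0 < n) {r : ℝ} (hr : 2 * n * r ≤ 1) :
    (μ (Set.Icc (x - r) (x + r))).toReal * (4 * n / π ^ 2) ≤ ∫ y, fejer n (x - y) ∂μ := by
  rw [mul_comm]
  calc 4 * n / π ^ 2 * (μ (Set.Icc (x - r) (x + r))).toReal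
      ≤ ∫ y in Set.Icc (x - r) (x + r), fejer n (x - y) ∂μ := by
        refine setIntegral_ge_of_const_le_real measurableSet_Icc (measure_ne_top μ _)
          (fun y hy => four_mul_div_pi_sq_le_fejer hn ?_) (integrable_fejer_sub μ x n).integrableOn
        have : |x - y| ≤ r := abs_le.mpr ⟨by linarith [hy.2], by linarith [hy.1]⟩
        nlinarith
    _ ≤ ∫ y, fejer n (x - y) ∂μ :=
        setIntegral_le_integral (integrable_fejer_sub μ x n) (ae_of_all _ fun y => fejer_nonneg _ _)

lemma measure_Icc_le_of_rpow_neg_mul_integral_fejer_le (hC : 0 ≤ C) {r : ℝ} (hr₀ : 0 < r)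
    (hr : r ≤ 1 / 4)
    (hG : (⌊1 / (2 * r)⌋₊ : ℝ) ^ (-β) * ∫ y, fejer ⌊1 / (2 * r)⌋₊ (x - y) ∂μ ≤ C) :
    (μ (Set.Icc (x - r) (x + r))).toReal ≤ π ^ 2 / 4 * C * 4 ^ |β - 1| * r ^ (1 - β) := by
  set n := ⌊1 / (2 * r)⌋₊
  have hn : 0 < n := natFloor_one_div_two_mul_pos hr₀ (by linarith)
  have hn' : (0 : ℝ) < n := Nat.cast_pos.2 hn
  rw [Real.rpow_neg hn'.le, inv_mul_le_iff₀ (by positivity)] at hG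
  have hkey :=
    measure_Icc_mul_le_integral_fejer μ x hn (two_mul_natFloor_one_div_two_mul_mul_le hr₀)
  calc (μ (Set.Icc (x - r) (x + r))).toReal ≤ n ^ β * C / (4 * n / π ^ 2) :=
        (le_div_iff₀ (by positivity)).2 (hkey.trans hG)
    _ = π ^ 2 / 4 * C * n ^ (β - 1) := by rw [Real.rpow_sub_one hn'.ne']; field_simp
    _ ≤ π ^ 2 / 4 * C * (4 ^ |β - 1| * r ^ (-(β - 1))) := by
        gcongr; exact natFloor_one_div_two_mul_rpow_le hr₀ hr _
    _ = π ^ 2 / 4 * C * 4 ^ |β - 1| * r ^ (1 - β) := by rw [neg_sub]; ring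

lemma eventually_measure_Icc_le_rpow (hC : 0 ≤ C)
    (h : ∀ᶠ n : ℕ in atTop, (n : ℝ) ^ (-β) * ∫ y, fejer n (x - y) ∂μ ≤ C) :
    ∀ᶠ r in 𝓝[>] 0,
      (μ (Set.Icc (x - r) (x + r))).toReal ≤ π ^ 2 / 4 * C * 4 ^ |β - 1| * r ^ (1 - β) := by
  filter_upwards [tendsto_natFloor_one_div_two_mul.eventually h,
    Ioo_mem_nhdsGT (by norm_num : (0 : ℝ) < 1 / 4)] with r hG hr
  exact measure_Icc_le_of_rpow_neg_mul_integral_fejer_le μ x hC hr.1 hr.2.le hG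

end

theorem stmt10_general (μ : Measure ℝ) [IsFiniteMeasure μ] (x : ℝ)
    (β : ℝ)
    (h : ∃ C : ℝ, ∀ᶠ (n : ℕ) in Filter.atTop,
      (n : ℝ) ^ (-β) * ∫ y, fejer n (x - y) ∂μ ≤ C) :
    ∀ α : ℝ, α < 1 - β → ∃ C' : ℝ,
      ∀ᶠ r in nhdsWithin (0:ℝ) (Set.Ioi 0),
        (μ (Set.Icc (x - r) (x + r))).toReal * r ^ (-α) ≤ C' := by
  intro α hα
  obtain ⟨C, hC⟩ := h
  have hC₀ : ∀ᶠ n : ℕ in atTop, (n : ℝ) ^ (-β) * ∫ y, fejer n (x - y) ∂μ ≤ max C 0 :=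
    hC.mono fun n hn => hn.trans (le_max_left C 0)
  have hK : 0 ≤ π ^ 2 / 4 * max C 0 * 4 ^ |β - 1| := by
    have := le_max_right C 0
    positivity
  exact ⟨_, eventually_mul_rpow_neg_le_of_le_rpow hK hα
    (eventually_measure_Icc_le_rpow μ x (le_max_right C 0) hC₀)⟩

/-- If `limsup_n n^{-β} G_n(x) < ∞` for some `β ∈ [-1,1]`, then for every
`α < 1 - β` one has `limsup_{r→0} μ([x-r,x+r]) r^{-α} < ∞`; i.e. the critical
Hölder exponent of `μ` at `x` is at least `1 - β`. The circle is represented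
by finite measures on `ℝ` supported on `[0,1)`. -/
theorem stmt10 (μ : Measure ℝ) [IsFiniteMeasure μ]
    (hsupp : μ (Set.Ico (0:ℝ) 1)ᶜ = 0) (x : ℝ) (hx : x ∈ Set.Ico (0:ℝ) 1)
    (β : ℝ) (hβ : β ∈ Set.Icc (-1 : ℝ) 1)
    (h : ∃ C : ℝ, ∀ᶠ (n : ℕ) in Filter.atTop,
      (n : ℝ) ^ (-β) * ∫ y, fejer n (x - y) ∂μ ≤ C) :
    ∀ α : ℝ, α < 1 - β → ∃ C' : ℝ,
      ∀ᶠ r in nhdsWithin (0:ℝ) (Set.Ioi 0),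
        (μ (Set.Icc (x - r) (x + r))).toReal * r ^ (-α) ≤ C' :=
  stmt10_general μ x β h
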